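/- arXiv:1205.1294 — 2 statements merged into one kernel-verified Lean document; each statement's English description precedes it below -/
import Mathlib

section
/- For natural number n, complex z with Re(z) > 0, and complex β, define ω(z, n+1, β) = ∑_{k=0}^{n} C(n,k) · β(β+1)⋯(β+k−1) · z^{−k} (with empty product 1 for k = 0). Then the symmetry ω(z, 1−(−m), 1−(n+1)) = ω(z, n+1, −m) holds for all naturals n, m; explicitly: ∑_{k=0}^{n} C(n,k)·(−m)(−m+1)⋯(−m+k−1)·z^{−k} = ∑_{k=0}^{m} C(m,k)·(−n)(−n+1)⋯(−n+k−1)·z^{−k}. -/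
open Finset

lemma prod_neg_cast (m k : ℕ) :
    ∏ j ∈ Finset.range k, (-(m : ℂ) + j) = (-1) ^ k * (m.choose k) * (k.factorial) := by
  induction k with
  | zero => simp
  | succ k ih =>
    rw [Finset.prod_range_succ, ih]
    rcases lt_or_ge k m with h | h
    · have hnat : (m.choose (k+1) : ℂ) * (k+1) = (m.choose k : ℂ) * ((m : ℂ) - k) := by
        have := Nat.choose_succ_right_eq m k
        have h2 : ((m - k : ℕ) : ℂ) = (m : ℂ) - k := by
          push_cast [Nat.cast_sub h.le]; ring
        calc (m.choose (k+1) : ℂ) * (k+1) = ((m.choose (k+1) * (k+1) : ℕ) : ℂ) := by push_cast; ring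
          _ = ((m.choose k * (m - k) : ℕ) : ℂ) := by rw [this]
          _ = (m.choose k : ℂ) * ((m : ℂ) - k) := by push_cast [Nat.cast_sub h.le]; ring
      have hfac : (((k+1).factorial : ℕ) : ℂ) = (k+1) * (k.factorial) := by
        rw [Nat.factorial_succ]; push_cast; ring
      rw [hfac]
      calc (-1:ℂ) ^ k * (m.choose k) * (k.factorial) * (-(m:ℂ) + k)
          = -((-1:ℂ)^k) * ((m.choose k : ℂ) * ((m:ℂ) - k)) * k.factorial := by ring
        _ = -((-1:ℂ)^k) * ((m.choose (k+1) : ℂ) * (k+1)) * k.factorial := by rw [hnat]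
        _ = (-1) ^ (k+1) * (m.choose (k+1)) * ((k+1) * (k.factorial)) := by ring
    · rcases eq_or_lt_of_le h with h' | h'
      · subst h'
        have : m.choose (m+1) = 0 := Nat.choose_eq_zero_of_lt (Nat.lt_succ_self m)
        simp [this]
      · have h1 : m.choose k = 0 := Nat.choose_eq_zero_of_lt h'
        have h2 : m.choose (k+1) = 0 := Nat.choose_eq_zero_of_lt (h'.trans (Nat.lt_succ_self k))
        simp [h1, h2]

/-- Polynomial symmetry of Shimura's confluent hypergeometric function:
`ω(z, n+1, -m) = ω(z, m+1, -n)` where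
`ω(z, n+1, β) = ∑_{k=0}^n C(n,k) β(β+1)⋯(β+k-1) z^{-k}`. -/
theorem stmt2 (n m : ℕ) (z : ℂ) (hz : 0 < z.re) :
    ∑ k ∈ Finset.range (n + 1),
      (n.choose k : ℂ) * (∏ j ∈ Finset.range k, (-(m : ℂ) + j)) * z ^ (-(k : ℤ))
    = ∑ k ∈ Finset.range (m + 1),
      (m.choose k : ℂ) * (∏ j ∈ Finset.range k, (-(n : ℂ) + j)) * z ^ (-(k : ℤ)) := by
  have key : ∀ a b : ℕ,
      ∑ k ∈ Finset.range (a + 1),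
        (a.choose k : ℂ) * (∏ j ∈ Finset.range k, (-(b : ℂ) + j)) * z ^ (-(k : ℤ))
      = ∑ k ∈ Finset.range (a + b + 1),
        (-1:ℂ)^k * (a.choose k) * (b.choose k) * (k.factorial) * z ^ (-(k : ℤ)) := by
    intro a b
    rw [Finset.sum_subset (Finset.range_subset_range.2 (by omega : a + 1 ≤ a + b + 1))]
    · apply Finset.sum_congr rfl
      intro k _
      rw [prod_neg_cast]
      ring
    · intro k _ hk
      have : a < k := by simp [Finset.mem_range] at hk ⊢; omega
      simp [Nat.choose_eq_zero_of_lt this]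
  rw [key n m, key m n]
  rw [show m + n = n + m by ring]
  apply Finset.sum_congr rfl
  intro k _
  ring
end

section
/- For y > 0 and an integer k ≥ 2, the integral over ℝ of (x+iy)^{−k} · exp(−2iπx) dx equals exp(−2πy) · (−i)^k · (2π)^k / Γ(k) · (so that it equals exp(−2πy) · (−2πi)^k · y^0 / (k−1)!), i.e. ∫_ℝ (x+iy)^{−k} e^{−2iπx} dx = (−2πi)^k e^{−2πy} / (k−1)!. -/
open MeasureTheory Complex Real

open Set Filter Topology FourierTransform Nat

/-!
By the Gamma integral `∫_0^∞ t^n e^{-ct} dt = n!/c^{n+1}` (for `Re c > 0`), the inverse Fourier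
transform of `g(t) = t^n e^{-2πyt} 1_{t>0}` is `n!/(-2πi(x+iy))^{n+1}`. For `n + 1 ≥ 2` this is
integrable in `x`, so Fourier inversion at the continuity point `t = 1` gives
`∫ e^{-2πix} n!/(-2πi(x+iy))^{n+1} dx = g(1) = e^{-2πy}`.
-/

section ComplexRate

variable {c : ℂ}

lemma norm_ofReal_pow_mul_cexp_neg_mul {t : ℝ} (ht : 0 ≤ t) (n : ℕ) :
    ‖(t : ℂ) ^ n * cexp (-(c * t))‖ = t ^ n * Real.exp (-c.re * t) := by
  simp [Complex.norm_exp, abs_of_nonneg ht]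

lemma integrableOn_ofReal_pow_mul_cexp_neg_mul_Ioi (hc : 0 < c.re) (n : ℕ) :
    IntegrableOn (fun t : ℝ ↦ (t : ℂ) ^ n * cexp (-(c * t))) (Ioi 0) := by
  have hs : (-1 : ℝ) < n := by linarith [n.cast_nonneg (α := ℝ)]
  refine (integrableOn_rpow_mul_exp_neg_mul_rpow hs one_pos hc).congr' (by fun_prop) ?_
  filter_upwards [ae_restrict_mem measurableSet_Ioi] with t ht
  rw [mem_Ioi] at ht
  rw [norm_ofReal_pow_mul_cexp_neg_mul ht.le, Real.rpow_natCast, Real.rpow_one,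
    Real.norm_of_nonneg (by positivity)]

lemma tendsto_ofReal_pow_mul_cexp_neg_mul_atTop (hc : 0 < c.re) (n : ℕ) :
    Tendsto (fun t : ℝ ↦ (t : ℂ) ^ n * cexp (-(c * t))) atTop (𝓝 0) := by
  rw [tendsto_zero_iff_norm_tendsto_zero]
  refine (tendsto_rpow_mul_exp_neg_mul_atTop_nhds_zero n c.re hc).congr' ?_
  filter_upwards [eventually_ge_atTop 0] with t ht
  rw [norm_ofReal_pow_mul_cexp_neg_mul ht, Real.rpow_natCast]

lemma hasDerivAt_ofReal_pow_succ_mul_cexp_neg_mul (c : ℂ) (n : ℕ) (t : ℝ) :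
    HasDerivAt (fun t : ℝ ↦ (t : ℂ) ^ (n + 1) * cexp (-(c * t)))
      ((n + 1) * ((t : ℂ) ^ n * cexp (-(c * t))) - c * ((t : ℂ) ^ (n + 1) * cexp (-(c * t))))
      t := by
  have hpow : HasDerivAt (fun z : ℂ ↦ z ^ (n + 1)) ((n + 1) * (t : ℂ) ^ n) t := by
    simpa using hasDerivAt_pow (n + 1) (t : ℂ)
  have hexp : HasDerivAt (fun z : ℂ ↦ cexp (-(c * z))) (cexp (-(c * t)) * -c) t := by
    simpa using ((hasDerivAt_id (t : ℂ)).const_mul c).neg.cexp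
  exact (hpow.mul hexp).comp_ofReal.congr_deriv (by ring)

lemma integral_ofReal_pow_mul_cexp_neg_mul_Ioi (hc : 0 < c.re) (n : ℕ) :
    ∫ t : ℝ in Ioi 0, (t : ℂ) ^ n * cexp (-(c * t)) = n ! / c ^ (n + 1) := by
  have hc₀ : c ≠ 0 := fun h ↦ by simp [h] at hc
  induction n with
  | zero =>
    simpa [neg_mul, div_neg, ← neg_div] using integral_exp_mul_complex_Ioi (a := -c) (by simpa) 0
  | succ n ih =>
    have hint := integrableOn_ofReal_pow_mul_cexp_neg_mul_Ioi hc
    -- `∫ d/dt (t ^ (n + 1) e^{-ct}) = 0`: the boundary terms at `0` and `∞` vanish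
    have hparts := integral_Ioi_of_hasDerivAt_of_tendsto (by fun_prop)
      (fun t _ ↦ hasDerivAt_ofReal_pow_succ_mul_cexp_neg_mul c n t)
      (((hint n).const_mul _).sub ((hint (n + 1)).const_mul _))
      (tendsto_ofReal_pow_mul_cexp_neg_mul_atTop hc (n + 1))
    rw [integral_sub ((hint n).const_mul _) ((hint (n + 1)).const_mul _), integral_const_mul,
      integral_const_mul, ih] at hparts
    simp only [ofReal_zero, zero_pow n.succ_ne_zero, zero_mul, sub_zero] at hparts
    rw [eq_div_iff (pow_ne_zero _ hc₀), factorial_succ]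
    field_simp at hparts
    push_cast
    linear_combination -hparts

end ComplexRate

noncomputable def powMulExpNegIoi (y : ℝ) (n : ℕ) : ℝ → ℂ :=
  (Ioi 0).indicator fun t ↦ (t : ℂ) ^ n * cexp (-(2 * π * y * t))

section PowMulExpNegIoi

variable {y : ℝ} (n : ℕ)

lemma integrable_powMulExpNegIoi (hy : 0 < y) : Integrable (powMulExpNegIoi y n) :=
  (integrable_indicator_iff measurableSet_Ioi).2 <|
    integrableOn_ofReal_pow_mul_cexp_neg_mul_Ioi (by simpa using by positivity) n

lemma continuousAt_powMulExpNegIoi {t : ℝ} (ht : 0 < t) :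
    ContinuousAt (powMulExpNegIoi y n) t := by
  refine ContinuousAt.congr (f := fun t : ℝ ↦ (t : ℂ) ^ n * cexp (-(2 * π * y * t)))
    (by fun_prop) ?_
  filter_upwards [Ioi_mem_nhds ht] with s hs
  rw [powMulExpNegIoi, indicator_of_mem hs]

lemma fourierInv_powMulExpNegIoi (hy : 0 < y) (x : ℝ) :
    𝓕⁻ (powMulExpNegIoi y n) x =
      n ! / (-2 * π * I) ^ (n + 1) * ((x : ℂ) + I * y) ^ (-((n + 1 : ℕ) : ℤ)) := by
  have hre : 0 < (-2 * π * I * (x + I * y)).re := by simpa using by positivity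
  rw [zpow_neg, zpow_natCast, ← div_eq_mul_inv, div_div, ← mul_pow,
    ← integral_ofReal_pow_mul_cexp_neg_mul_Ioi hre, ← integral_indicator measurableSet_Ioi,
    fourierInv_eq']
  congr 1 with t
  by_cases ht : t ∈ Ioi 0
  · rw [powMulExpNegIoi, indicator_of_mem ht, indicator_of_mem ht, smul_eq_mul, mul_left_comm,
      ← Complex.exp_add]
    congr 2
    push_cast [Real.inner_apply]
    linear_combination (-2 * π * y * t : ℂ) * I_sq
  · simp [powMulExpNegIoi, indicator_of_notMem ht]

end PowMulExpNegIoi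

section InvPow

variable {y : ℝ}

lemma sq_norm_ofReal_add_I_mul (x : ℝ) : ‖(x : ℂ) + I * y‖ ^ 2 = x ^ 2 + y ^ 2 := by
  rw [Complex.sq_norm, normSq_apply]
  simp only [add_re, ofReal_re, mul_re, I_re, zero_mul, I_im, ofReal_im, mul_zero, sub_self,
    add_zero, add_im, mul_im, one_mul, zero_add]
  ring

lemma le_norm_ofReal_add_I_mul (hy : 0 ≤ y) (x : ℝ) : y ≤ ‖(x : ℂ) + I * y‖ := by
  simpa [abs_of_nonneg hy] using abs_im_le_norm ((x : ℂ) + I * y)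

lemma integrable_ofReal_add_I_mul_zpow_neg (hy : 0 < y) {k : ℕ} (hk : 2 ≤ k) :
    Integrable fun x : ℝ ↦ ((x : ℂ) + I * y) ^ (-(k : ℤ)) := by
  set m := min (y ^ 2) 1
  have hm : 0 < m := by positivity
  have hne (x : ℝ) : (x : ℂ) + I * y ≠ 0 :=
    norm_pos_iff.1 (hy.trans_le (le_norm_ofReal_add_I_mul hy.le x))
  refine (integrable_inv_one_add_sq.const_mul (y ^ (k - 2) * m)⁻¹).mono'
    ((continuous_ofReal.add continuous_const).zpow₀ _ fun x ↦ .inl (hne x)).aestronglyMeasurable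
    (.of_forall fun x ↦ ?_)
  have hsq : m * (1 + x ^ 2) ≤ ‖(x : ℂ) + I * y‖ ^ 2 := by
    rw [sq_norm_ofReal_add_I_mul]
    nlinarith [min_le_left (y ^ 2) 1, min_le_right (y ^ 2) 1]
  have hpow : y ^ (k - 2) ≤ ‖(x : ℂ) + I * y‖ ^ (k - 2) :=
    pow_le_pow_left₀ hy.le (le_norm_ofReal_add_I_mul hy.le x) _
  calc ‖((x : ℂ) + I * y) ^ (-(k : ℤ))‖
        = (‖(x : ℂ) + I * y‖ ^ (k - 2) * ‖(x : ℂ) + I * y‖ ^ 2)⁻¹ := by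
          rw [← pow_add, Nat.sub_add_cancel hk, norm_zpow, zpow_neg, zpow_natCast]
    _ ≤ (y ^ (k - 2) * (m * (1 + x ^ 2)))⁻¹ := by gcongr
    _ = (y ^ (k - 2) * m)⁻¹ * (1 + x ^ 2)⁻¹ := by rw [← mul_assoc, mul_inv]

end InvPow

/-- For `y > 0` and `k ≥ 2`,
`∫_ℝ (x+iy)^{-k} e^{-2iπx} dx = (-2πi)^k e^{-2πy} / (k-1)!`. -/
theorem stmt3 (y : ℝ) (hy : 0 < y) (k : ℕ) (hk : 2 ≤ k) :
    ∫ x : ℝ, ((x : ℂ) + Complex.I * y) ^ (-(k : ℤ))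
        * Complex.exp (-2 * (π : ℂ) * Complex.I * x)
    = (-2 * (π : ℂ) * Complex.I) ^ k * Complex.exp (-2 * (π : ℂ) * y)
        / ((k - 1).factorial : ℂ) := by
  obtain ⟨n, rfl⟩ : ∃ n, k = n + 1 := ⟨k - 1, by omega⟩
  set g := powMulExpNegIoi y n
  have hFinv : 𝓕⁻ g = fun x : ℝ ↦
      n ! / (-2 * π * I) ^ (n + 1) * ((x : ℂ) + I * y) ^ (-((n + 1 : ℕ) : ℤ)) :=
    funext (fourierInv_powMulExpNegIoi n hy)
  have hint : Integrable (𝓕⁻ g) :=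
    hFinv ▸ (integrable_ofReal_add_I_mul_zpow_neg hy hk).const_mul _
  have hinv : 𝓕 (𝓕⁻ g) 1 = g 1 :=
    (integrable_powMulExpNegIoi n hy).fourier_fourierInv_eq
      (by simpa [fourierInv_eq_fourier_neg] using hint.comp_neg)
      (continuousAt_powMulExpNegIoi n one_pos)
  set J := ∫ x : ℝ, ((x : ℂ) + I * y) ^ (-((n + 1 : ℕ) : ℤ)) * cexp (-2 * π * I * x)
  have key : n ! / (-2 * π * I) ^ (n + 1) * J = cexp (-2 * π * y) := by
    rw [← integral_const_mul]
    convert hinv using 1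
    · rw [fourier_real_eq_integral_exp_smul, hFinv]
      congr 1 with x
      push_cast
      ring_nf
    · simp [g, powMulExpNegIoi]
  rw [Nat.add_sub_cancel, ← key]
  field_simp [Nat.cast_ne_zero.2 n.factorial_ne_zero]
end
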